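/- arXiv:2206.00315 — 5 statements merged into one kernel-verified Lean document; each statement's English description precedes it below -/
import Mathlib

section
/- Let S be a complex vector space with a bilinear multiplication (x,y) ↦ x*y satisfying both the left Zinbiel identity (x*y)*z = x*(y*z + z*y) and the right Zinbiel identity x*(y*z) = (x*y + y*x)*z for all x,y,z ∈ S. Then (x*y)*z = -(y*(z*x)) for all x, y, z ∈ S. -/
/-- In a symmetric Zinbiel algebra over ℂ,
`(x*y)*z = -(y*(z*x))` for all `x, y, z`. -/
theorem symmetric_zinbiel_identity_one (S : Type*) [AddCommGroup S] [Module ℂ S]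
    (mul : S →ₗ[ℂ] S →ₗ[ℂ] S)
    (hL : ∀ x y z : S, mul (mul x y) z = mul x (mul y z + mul z y))
    (hR : ∀ x y z : S, mul x (mul y z) = mul (mul x y + mul y x) z) :
    ∀ x y z : S, mul (mul x y) z = - mul y (mul z x) := by
  intro x y z
  have h1 := hL y x z
  have h2 := hR y x z
  simp only [map_add, LinearMap.add_apply] at h1 h2
  rw [h2, add_assoc] at h1
  have h3 : mul (mul x y) z + mul y (mul z x) = 0 := (left_eq_add.mp h1)
  exact eq_neg_of_add_eq_zero_left h3
end

section
/- Let S be a complex vector space with a bilinear multiplication (x,y) ↦ x*y satisfying both the left Zinbiel identity (x*y)*z = x*(y*z + z*y) and the right Zinbiel identity x*(y*z) = (x*y + y*x)*z for all x,y,z ∈ S. Then (x*y)*z = -(z*(y*x)) for all x, y, z ∈ S. -/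
/-- In a symmetric Zinbiel algebra over ℂ,
`(x*y)*z = -(z*(y*x))` for all `x, y, z`. -/
theorem symmetric_zinbiel_identity_two (S : Type*) [AddCommGroup S] [Module ℂ S]
    (mul : S →ₗ[ℂ] S →ₗ[ℂ] S)
    (hL : ∀ x y z : S, mul (mul x y) z = mul x (mul y z + mul z y))
    (hR : ∀ x y z : S, mul x (mul y z) = mul (mul x y + mul y x) z) :
    ∀ x y z : S, mul (mul x y) z = - mul z (mul y x) := by
  -- Key identity: (ab)c = -(b(ca))
  have K : ∀ a b c : S, mul (mul a b) c = - mul b (mul c a) := by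
    intro a b c
    have h1 := hL b a c
    have h2 := hR b a c
    rw [map_add] at h1
    rw [map_add, LinearMap.add_apply] at h2
    rw [h2] at h1
    rw [add_assoc] at h1
    exact eq_neg_of_add_eq_zero_left (left_eq_add.mp h1)
  -- Cyclic identity: [xyz] + [zxy] + [yxz] = 0 where [abc] = (ab)c
  have T : ∀ x y z : S,
      mul (mul x y) z + mul (mul z x) y + mul (mul y x) z = 0 := by
    intro x y z
    have h1 := hL x y z
    rw [map_add] at h1
    rw [show mul x (mul y z) = - mul (mul z x) y by rw [K z x y]; abel,
        show mul x (mul z y) = - mul (mul y x) z by rw [K y x z]; abel] at h1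
    rw [h1]; abel
  -- Symmetry in the last two slots: (zx)y = (zy)x
  have Sym : ∀ x y z : S, mul (mul z x) y = mul (mul z y) x := by
    intro x y z
    have t1 := T x y z
    have t2 := T y x z
    have h : mul (mul z x) y - mul (mul z y) x =
        (mul (mul x y) z + mul (mul z x) y + mul (mul y x) z) -
        (mul (mul y x) z + mul (mul z y) x + mul (mul x y) z) := by abel
    rw [t1, t2, sub_zero] at h
    exact sub_eq_zero.mp h
  intro x y z
  rw [Sym y z x, K x z y]
end

section
/- Let S be a complex vector space with a bilinear multiplication (x,y) ↦ x*y satisfying both the left Zinbiel identity (x*y)*z = x*(y*z + z*y) and the right Zinbiel identity x*(y*z) = (x*y + y*x)*z for all x,y,z ∈ S. Then S is 3-step nilpotent: every product of four elements vanishes, i.e. for all w,x,y,z ∈ S one has ((w*x)*y)*z = 0, (w*(x*y))*z = 0, (w*x)*(y*z) = 0, w*((x*y)*z) = 0 and w*(x*(y*z)) = 0. -/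
/-- A symmetric Zinbiel algebra over ℂ is 3-step nilpotent:
every product of four elements vanishes. -/
theorem symmetric_zinbiel_three_step_nilpotent (S : Type*) [AddCommGroup S] [Module ℂ S]
    (mul : S →ₗ[ℂ] S →ₗ[ℂ] S)
    (hL : ∀ x y z : S, mul (mul x y) z = mul x (mul y z + mul z y))
    (hR : ∀ x y z : S, mul x (mul y z) = mul (mul x y + mul y x) z) :
    ∀ w x y z : S,
      mul (mul (mul w x) y) z = 0 ∧
      mul (mul w (mul x y)) z = 0 ∧
      mul (mul w x) (mul y z) = 0 ∧
      mul w (mul (mul x y) z) = 0 ∧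
      mul w (mul x (mul y z)) = 0 := by
  -- Key identity B:  x(yz) = -(zx)y
  have hB : ∀ x y z : S, mul x (mul y z) = - mul (mul z x) y := by
    intro x y z
    have a := hL x z y
    have b := hR x z y
    simp only [map_add, LinearMap.add_apply] at a b
    -- a : mul (mul x z) y = mul x (mul z y) + mul x (mul y z)
    -- b : mul x (mul z y) = mul (mul x z) y + mul (mul z x) y
    linear_combination (norm := module) -a - b
  -- F : (ab)(cd) = ((bd)a)c
  have hF : ∀ a b c d : S, mul (mul a b) (mul c d) = mul (mul (mul b d) a) c := by
    intro a b c d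
    have h1 := hB (mul a b) c d
    have h2 := hB d a b
    rw [h2] at h1
    simp only [map_neg, LinearMap.neg_apply, neg_neg] at h1
    exact h1
  -- D : (ab)(cd) = -((ac)b)d
  have hD : ∀ a b c d : S, mul (mul a b) (mul c d) = - mul (mul (mul a c) b) d := by
    intro a b c d
    have h2 : mul (mul c d) a = - mul d (mul a c) := by rw [hB d a c, neg_neg]
    have h1 := hB b (mul c d) a
    rw [h2, map_neg] at h1
    -- h1 : - mul b (mul d (mul a c)) = - mul (mul a b) (mul c d)
    have h3 := hB b d (mul a c)
    -- h3 : mul b (mul d (mul a c)) = - mul (mul (mul a c) b) d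
    linear_combination (norm := module) h1 + h3
  -- R1 : G p q r s = - G r s p q     (G a b c d := ((ab)c)d)
  have hR1 : ∀ p q r s : S, mul (mul (mul p q) r) s = - mul (mul (mul r s) p) q := by
    intro p q r s
    have h1 := hF r p s q
    have h2 := hD r p s q
    linear_combination (norm := module) h2 - h1
  -- R2 : G a b c d = G b d a c + G b c a d
  have hR2 : ∀ a b c d : S, mul (mul (mul a b) c) d
      = mul (mul (mul b d) a) c + mul (mul (mul b c) a) d := by
    intro a b c d
    have h0 := hL (mul a b) c d
    rw [map_add] at h0
    have h1 := hF a b c d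
    have h2 := hF a b d c
    linear_combination (norm := module) h0 + h1 + h2
  -- main vanishing: G a b c d = 0
  have hZ : ∀ a b c d : S, mul (mul (mul a b) c) d = 0 := by
    intro a b c d
    linear_combination (norm := module)
      ((1:ℂ)/2) • hR2 a b c d + ((1:ℂ)/2) • hR1 a c b d + ((1:ℂ)/2) • hR1 a d b c
      - ((1:ℂ)/2) • hR1 a d c b + ((1:ℂ)/2) • hR2 b a c d + ((1:ℂ)/2) • hR1 b d c a
      - ((1:ℂ)/2) • hR2 c a b d + ((1:ℂ)/2) • hR2 c b a d
  have hZ2 : ∀ w x y z : S, mul (mul w (mul x y)) z = 0 := by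
    intro w x y z
    rw [hB w x y]
    simp only [map_neg, LinearMap.neg_apply, hZ, neg_zero]
  have hZ3 : ∀ w x y z : S, mul (mul w x) (mul y z) = 0 := by
    intro w x y z
    rw [hF w x y z]
    exact hZ x z w y
  intro w x y z
  refine ⟨hZ w x y z, hZ2 w x y z, hZ3 w x y z, ?_, ?_⟩
  · rw [hB w (mul x y) z, hZ3, neg_zero]
  · rw [hB w x (mul y z), hZ, neg_zero]
end

section
/- Let S be a finite-dimensional complex vector space of dimension at most 5, equipped with a bilinear multiplication (x,y) ↦ x*y satisfying both the left Zinbiel identity (x*y)*z = x*(y*z + z*y) and the right Zinbiel identity x*(y*z) = (x*y + y*x)*z for all x,y,z ∈ S. Then S is 2-step nilpotent: (x*y)*z = 0 for all x, y, z ∈ S. -/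
section ZinbielAux
variable {S : Type*} [AddCommGroup S] [Module ℂ S]
variable (mul : S →ₗ[ℂ] S →ₗ[ℂ] S)
variable (hL : ∀ x y z : S, mul (mul x y) z = mul x (mul y z + mul z y))
variable (hR : ∀ x y z : S, mul x (mul y z) = mul (mul x y + mul y x) z)

include hL hR in
/-- (pq)r = -q(rp) -/
lemma zin_e1 : ∀ p q r : S, mul (mul p q) r = - mul q (mul r p) := by
  intro p q r
  have h1 := hL q p r
  have h2 := hR q p r
  rw [map_add] at h1
  rw [h2] at h1
  rw [map_add, LinearMap.add_apply] at h1
  linear_combination (norm := module) -h1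

include hL hR in
/-- q(rp) = -(pq)r -/
lemma zin_e1' : ∀ p q r : S, mul q (mul r p) = - mul (mul p q) r := by
  intro p q r
  rw [zin_e1 mul hL hR p q r]; abel

include hL in
/-- (xy)z = (xz)y -/
lemma zin_e2 : ∀ x y z : S, mul (mul x y) z = mul (mul x z) y := by
  intro x y z
  rw [hL x y z, hL x z y, add_comm]

include hL hR in
/-- (xy)z + (yx)z + (zx)y = 0 -/
lemma zin_cyc : ∀ x y z : S, mul (mul x y) z + mul (mul y x) z + mul (mul z x) y = 0 := by
  intro x y z
  have h1 := hL x y z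
  rw [map_add] at h1
  have h2 := zin_e1 mul hL hR y x z
  have h3 := zin_e1 mul hL hR z x y
  linear_combination (norm := module) h1 + h2 + h3

include hL hR in
/-- (x∘y)c + c(x∘y) = 0 -/
lemma zin_anti : ∀ x y c : S, mul (mul x y + mul y x) c + mul c (mul x y + mul y x) = 0 := by
  intro x y c
  have h1 := zin_e1' mul hL hR y c x
  have h2 := zin_e1' mul hL hR x c y
  have h3 := zin_e2 mul hL y c x
  have h4 := zin_e2 mul hL x c y
  rw [map_add, LinearMap.add_apply, map_add]
  rw [h1, h2, h3, h4]
  abel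

include hL hR in
/-- x(y(cd)) = 0 -/
lemma zin_f0 : ∀ x y c d : S, mul x (mul y (mul c d)) = 0 := by
  intro x y c d
  have h1 := hR x y (mul c d)
  have h2 := hR (mul x y + mul y x) c d
  have h3 := zin_anti mul hL hR x y c
  rw [h3, map_zero, LinearMap.zero_apply] at h2
  rw [h1, h2]

include hL hR in
/-- (ab)(cd) = 0 -/
lemma zin_m0 : ∀ a b c d : S, mul (mul a b) (mul c d) = 0 := by
  intro a b c d
  have h1 := hL a b (mul c d)
  have h2 := zin_f0 mul hL hR a b c d
  have h3 := zin_e1 mul hL hR c d b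
  have h4 := zin_f0 mul hL hR a d b c
  rw [h3] at h1
  rw [map_add, map_neg] at h1
  rw [h2, h4] at h1
  simpa using h1

include hL hR in
/-- ((ab)c)d = 0 -/
lemma zin_p0 : ∀ a b c d : S, mul (mul (mul a b) c) d = 0 := by
  intro a b c d
  have h1 := zin_e1 mul hL hR (mul a b) c d
  have h2 := zin_e1' mul hL hR b d a
  have h3 := zin_e1' mul hL hR a c (mul b d)
  have h4 := zin_m0 mul hL hR a c b d
  rw [h2, map_neg, h3, h4] at h1
  simpa using h1

include hL hR in
/-- d((ab)c) = 0 -/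
lemma zin_q0 : ∀ a b c d : S, mul d (mul (mul a b) c) = 0 := by
  intro a b c d
  have h1 := zin_e1' mul hL hR c d (mul a b)
  have h2 := zin_m0 mul hL hR c d a b
  rw [h1, h2, neg_zero]

include hL hR in
/-- (x(uv))z = 0 -/
lemma zin_mid : ∀ x u v z : S, mul (mul x (mul u v)) z = 0 := by
  intro x u v z
  have h1 := zin_e1' mul hL hR v x u
  rw [h1, map_neg, LinearMap.neg_apply, zin_p0 mul hL hR v x u z, neg_zero]

/-- if a linear map vanishes on a set it vanishes on the span -/
lemma zin_span_kill (f : S →ₗ[ℂ] S) (s : Set S) (h : ∀ u ∈ s, f u = 0) :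
    ∀ u ∈ Submodule.span ℂ s, f u = 0 := by
  intro u hu
  induction hu using Submodule.span_induction with
  | mem x hx => exact h x hx
  | zero => simp
  | add x y _ _ hx hy => simp [map_add, hx, hy]
  | smul c x _ hx => simp [map_smul, hx]

lemma zin_exists_spanning (M : Type*) [AddCommGroup M] [Module ℂ M] [FiniteDimensional ℂ M]
    (n : ℕ) (h : Module.finrank ℂ M ≤ n) :
    ∃ v : Fin n → M, ∀ u : M, u ∈ Submodule.span ℂ (Set.range v) := by
  let B := Module.finBasis ℂ M
  refine ⟨fun i => if h' : (i : ℕ) < Module.finrank ℂ M then B ⟨i, h'⟩ else 0, fun u => ?_⟩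
  have hmem : u ∈ Submodule.span ℂ (Set.range B) := by rw [B.span_eq]; trivial
  refine Submodule.span_mono ?_ hmem
  rintro x ⟨j, rfl⟩
  refine ⟨⟨(j : ℕ), lt_of_lt_of_le j.2 h⟩, ?_⟩
  simp [j.2]

end ZinbielAux

/-- A symmetric Zinbiel algebra over ℂ of dimension at most 5
is 2-step nilpotent: `(x*y)*z = 0` for all `x, y, z`. -/
theorem symmetric_zinbiel_dim_le_five_two_step_nilpotent
    (S : Type*) [AddCommGroup S] [Module ℂ S] [FiniteDimensional ℂ S]
    (hdim : Module.finrank ℂ S ≤ 5)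
    (mul : S →ₗ[ℂ] S →ₗ[ℂ] S)
    (hL : ∀ x y z : S, mul (mul x y) z = mul x (mul y z + mul z y))
    (hR : ∀ x y z : S, mul x (mul y z) = mul (mul x y + mul y x) z) :
    ∀ x y z : S, mul (mul x y) z = 0 := by
  by_contra hcon
  push_neg at hcon
  obtain ⟨a0, b0, c0, hT⟩ := hcon
  -- the spans of products and triple products
  set A2 : Submodule ℂ S := Submodule.span ℂ {u : S | ∃ x y, mul x y = u} with hA2def
  set A3 : Submodule ℂ S := Submodule.span ℂ {u : S | ∃ x y z, mul (mul x y) z = u} with hA3def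
  have hmulmem : ∀ x y : S, mul x y ∈ A2 := fun x y => Submodule.subset_span ⟨x, y, rfl⟩
  have htripmem : ∀ x y z : S, mul (mul x y) z ∈ A3 :=
    fun x y z => Submodule.subset_span ⟨x, y, z, rfl⟩
  have hA3A2 : A3 ≤ A2 := by
    rw [hA3def, Submodule.span_le]
    rintro u ⟨x, y, z, rfl⟩
    exact hmulmem _ _
  -- kill lemmas
  have k3L : ∀ u ∈ A3, ∀ z : S, mul u z = 0 := by
    intro u hu z
    have := zin_span_kill (mul.flip z) _
      (fun w hw => by
        obtain ⟨x, y, z', rfl⟩ := hw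
        simpa using zin_p0 mul hL hR x y z' z) u hu
    simpa using this
  have k3R : ∀ u ∈ A3, ∀ z : S, mul z u = 0 := by
    intro u hu z
    exact zin_span_kill (mul z) _
      (fun w hw => by
        obtain ⟨x, y, z', rfl⟩ := hw
        exact zin_q0 mul hL hR x y z' z) u hu
  have k2a : ∀ u ∈ A2, ∀ y z : S, mul (mul u y) z = 0 := by
    intro u hu y z
    have := zin_span_kill ((mul.flip z).comp (mul.flip y)) _
      (fun w hw => by
        obtain ⟨x, y', rfl⟩ := hw
        simpa using zin_p0 mul hL hR x y' y z) u hu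
    simpa using this
  have k2b : ∀ u ∈ A2, ∀ x z : S, mul (mul x u) z = 0 := by
    intro u hu x z
    have := zin_span_kill ((mul.flip z).comp (mul x)) _
      (fun w hw => by
        obtain ⟨u', v', rfl⟩ := hw
        simpa using zin_mid mul hL hR x u' v' z) u hu
    simpa using this
  have k2c : ∀ u ∈ A2, ∀ x y : S, mul (mul x y) u = 0 := by
    intro u hu x y
    exact zin_span_kill (mul (mul x y)) _
      (fun w hw => by
        obtain ⟨u', v', rfl⟩ := hw
        exact zin_m0 mul hL hR x y u' v') u hu
  -- substitution lemmas
  have sub1 : ∀ x x' y z : S, x - x' ∈ A2 → mul (mul x y) z = mul (mul x' y) z := by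
    intro x x' y z hx
    have h0 := k2a _ hx y z
    have he : mul (mul (x - x') y) z = mul (mul x y) z - mul (mul x' y) z := by
      simp [map_sub, LinearMap.sub_apply]
    rw [he] at h0
    exact sub_eq_zero.mp h0
  have sub2 : ∀ x x' y z : S, x - x' ∈ A2 → mul (mul y x) z = mul (mul y x') z := by
    intro x x' y z hx
    have h0 := k2b _ hx y z
    have he : mul (mul y (x - x')) z = mul (mul y x) z - mul (mul y x') z := by
      simp [map_sub, LinearMap.sub_apply]
    rw [he] at h0
    exact sub_eq_zero.mp h0
  have sub3 : ∀ x x' y z : S, x - x' ∈ A2 → mul (mul y z) x = mul (mul y z) x' := by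
    intro x x' y z hx
    have h0 := k2c _ hx y z
    have he : mul (mul y z) (x - x') = mul (mul y z) x - mul (mul y z) x' := by
      simp [map_sub]
    rw [he] at h0
    exact sub_eq_zero.mp h0
  -- Piece 1 : if S/A2 has rank ≤ 1 we get a contradiction
  have pieceOne : Module.finrank ℂ (S ⧸ A2) ≤ 1 → False := by
    intro h1
    obtain ⟨v, hv⟩ := zin_exists_spanning (S ⧸ A2) 1 h1
    obtain ⟨e, he⟩ := A2.mkQ_surjective (v 0)
    have hmod : ∀ u : S, ∃ α : ℂ, u - α • e ∈ A2 := by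
      intro u
      have hu := hv (A2.mkQ u)
      rw [show Set.range v = {v 0} from Set.range_unique, Submodule.mem_span_singleton] at hu
      obtain ⟨α, hα⟩ := hu
      refine ⟨α, ?_⟩
      have : A2.mkQ (u - α • e) = 0 := by
        rw [map_sub, map_smul, he, hα, sub_self]
      rwa [Submodule.mkQ_apply, Submodule.Quotient.mk_eq_zero] at this
    obtain ⟨α, hα⟩ := hmod a0
    obtain ⟨β, hβ⟩ := hmod b0
    obtain ⟨γ, hγ⟩ := hmod c0
    have heee : mul (mul e e) e = 0 := by
      have h3 := zin_cyc mul hL hR e e e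
      have h4 : (3 : ℂ) • mul (mul e e) e = 0 := by
        linear_combination (norm := module) h3
      rcases smul_eq_zero.mp h4 with h | h
      · norm_num at h
      · exact h
    apply hT
    calc mul (mul a0 b0) c0 = mul (mul (α • e) b0) c0 := sub1 _ _ _ _ hα
      _ = α • mul (mul e b0) c0 := by simp
      _ = α • mul (mul e (β • e)) c0 := by rw [sub2 _ _ _ _ hβ]
      _ = (α * β) • mul (mul e e) c0 := by simp [smul_smul]
      _ = (α * β) • mul (mul e e) (γ • e) := by rw [sub3 _ _ _ _ hγ]
      _ = 0 := by simp [heee]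
  -- second quotient
  set A3' : Submodule ℂ A2 := A3.comap A2.subtype with hA3'def
  have hmemA3' : ∀ u : A2, u ∈ A3' ↔ (u : S) ∈ A3 := fun u => Iff.rfl
  -- a functional detecting a nonzero triple product exists
  have hdual : ∀ w : S, w ≠ 0 → ∃ φ : Module.Dual ℂ S, φ w ≠ 0 := by
    intro w hw
    by_contra hno
    push_neg at hno
    exact hw ((Module.forall_dual_apply_eq_zero_iff ℂ w).mp hno)
  -- Piece 2 : finrank Q2 ≥ 2
  have hd2 : 2 ≤ Module.finrank ℂ (A2 ⧸ A3') := by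
    by_contra hlt
    push_neg at hlt
    obtain ⟨v, hv⟩ := zin_exists_spanning (A2 ⧸ A3') 1 (by omega)
    obtain ⟨w', hw'⟩ := A3'.mkQ_surjective (v 0)
    have hfac : ∀ x y : S, ∃ β : ℂ, ∀ z : S,
        mul (mul x y) z = β • mul (w' : S) z := by
      intro x y
      have hu := hv (A3'.mkQ (⟨mul x y, hmulmem x y⟩ : A2))
      rw [show Set.range v = {v 0} from Set.range_unique, Submodule.mem_span_singleton] at hu
      obtain ⟨β, hβ⟩ := hu
      have hz : ((⟨mul x y, hmulmem x y⟩ : A2) - β • w' : A2) ∈ A3' := by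
        have : A3'.mkQ ((⟨mul x y, hmulmem x y⟩ : A2) - β • w') = 0 := by
          rw [map_sub, map_smul, hw', hβ, sub_self]
        rwa [Submodule.mkQ_apply, Submodule.Quotient.mk_eq_zero] at this
      have hzS : mul x y - β • (w' : S) ∈ A3 := by
        have := (hmemA3' _).mp hz
        simpa using this
      refine ⟨β, fun z => ?_⟩
      have h0 := k3L _ hzS z
      have he : mul (mul x y - β • (w' : S)) z
          = mul (mul x y) z - β • mul (w' : S) z := by
        simp [map_sub, LinearMap.sub_apply]
      rw [he] at h0
      exact sub_eq_zero.mp h0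
    obtain ⟨φ, hφ⟩ := hdual _ hT
    set f : S → S → S → ℂ := fun x y z => φ (mul (mul x y) z) with hfdef
    set γf : S → ℂ := fun z => φ (mul (w' : S) z) with hγdef
    choose β hβ using hfac
    have hf : ∀ x y z : S, f x y z = β x y * γf z := by
      intro x y z
      simp only [hfdef, hγdef, hβ x y z, map_smul, smul_eq_mul]
    have fsym : ∀ x y z : S, f x y z = f x z y := by
      intro x y z
      simp only [hfdef, zin_e2 mul hL x y z]
    have fcyc : ∀ x y z : S, f x y z + f y x z + f z x y = 0 := by
      intro x y z
      have h0 := congrArg φ (zin_cyc mul hL hR x y z)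
      simpa [hfdef] using h0
    have hγc0 : γf c0 ≠ 0 := by
      intro h0
      apply hφ
      show f a0 b0 c0 = 0
      rw [hf, h0, mul_zero]
    have key1 : ∀ x y z : S, β x y * γf z = β x z * γf y := by
      intro x y z
      rw [← hf, ← hf]
      exact fsym x y z
    have hβcc : β c0 c0 = 0 := by
      have h1 := fcyc c0 c0 c0
      simp only [hf] at h1
      have h2 : β c0 c0 * γf c0 = 0 := by linear_combination h1 / 3
      exact (mul_eq_zero.mp h2).resolve_right hγc0
    have hβx : ∀ x : S, β x c0 = 0 := by
      intro x
      have h1 := fcyc x c0 c0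
      simp only [hf] at h1
      have h2 := key1 c0 x c0
      have h3 : β x c0 * γf c0 = 0 := by
        linear_combination h1 - 2 * h2 - 2 * γf x * hβcc
      exact (mul_eq_zero.mp h3).resolve_right hγc0
    apply hφ
    show f a0 b0 c0 = 0
    rw [hf, key1 a0 b0 c0, hβx a0, zero_mul]
  -- dimension bookkeeping
  have hsum1 : Module.finrank ℂ (S ⧸ A2) + Module.finrank ℂ A2 = Module.finrank ℂ S :=
    Submodule.finrank_quotient_add_finrank A2
  have hsum2 : Module.finrank ℂ (A2 ⧸ A3') + Module.finrank ℂ A3' = Module.finrank ℂ A2 :=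
    Submodule.finrank_quotient_add_finrank A3'
  have h33 : Module.finrank ℂ A3' = Module.finrank ℂ A3 :=
    LinearEquiv.finrank_eq (Submodule.comapSubtypeEquivOfLe hA3A2)
  have hd3 : 1 ≤ Module.finrank ℂ A3 := by
    rw [Nat.one_le_iff_ne_zero]
    intro h0
    have : A3 = ⊥ := Submodule.finrank_eq_zero.mp h0
    apply hT
    have hmem := htripmem a0 b0 c0
    rw [this] at hmem
    exact (Submodule.mem_bot ℂ).mp hmem
  -- Piece 3 setup : S/A2 is spanned by two elements
  have hq1le : Module.finrank ℂ (S ⧸ A2) ≤ 2 := by omega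
  obtain ⟨v, hv⟩ := zin_exists_spanning (S ⧸ A2) 2 hq1le
  obtain ⟨a, ha⟩ := A2.mkQ_surjective (v 0)
  obtain ⟨b, hb⟩ := A2.mkQ_surjective (v 1)
  have hrange2 : Set.range v = {v 0, v 1} := by
    ext u
    constructor
    · rintro ⟨i, rfl⟩
      fin_cases i <;> simp
    · rintro (rfl | rfl)
      · exact ⟨0, rfl⟩
      · exact ⟨1, rfl⟩
  have hmod : ∀ u : S, ∃ α β : ℂ, u - (α • a + β • b) ∈ A2 := by
    intro u
    have hu := hv (A2.mkQ u)
    rw [hrange2, Submodule.mem_span_pair] at hu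
    obtain ⟨α, β, hαβ⟩ := hu
    refine ⟨α, β, ?_⟩
    have h0 : A2.mkQ (u - (α • a + β • b)) = 0 := by
      rw [map_sub, map_add, map_smul, map_smul, ha, hb, hαβ, sub_self]
    rwa [Submodule.mkQ_apply, Submodule.Quotient.mk_eq_zero] at h0
  obtain ⟨α1, α2, hα⟩ := hmod a0
  obtain ⟨β1, β2, hβ2⟩ := hmod b0
  obtain ⟨γ1, γ2, hγ2⟩ := hmod c0
  have ex1 : ∀ y z : S, mul (mul a0 y) z
      = α1 • mul (mul a y) z + α2 • mul (mul b y) z := by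
    intro y z
    rw [sub1 a0 (α1 • a + α2 • b) y z hα]
    simp [map_add, map_smul, LinearMap.add_apply, LinearMap.smul_apply]
  have ex2 : ∀ x z : S, mul (mul x b0) z
      = β1 • mul (mul x a) z + β2 • mul (mul x b) z := by
    intro x z
    rw [sub2 b0 (β1 • a + β2 • b) x z hβ2]
    simp [map_add, map_smul, LinearMap.add_apply, LinearMap.smul_apply]
  have ex3 : ∀ x y : S, mul (mul x y) c0
      = γ1 • mul (mul x y) a + γ2 • mul (mul x y) b := by
    intro x y
    rw [sub3 c0 (γ1 • a + γ2 • b) x y hγ2]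
    simp [map_add, map_smul]
  -- find a nonvanishing triple product on {a,b}
  have hbase : ∃ p, (p = a ∨ p = b) ∧ ∃ q, (q = a ∨ q = b) ∧ ∃ r, (r = a ∨ r = b) ∧
      mul (mul p q) r ≠ 0 := by
    by_contra hno
    push_neg at hno
    apply hT
    have z3 : ∀ p, (p = a ∨ p = b) → ∀ q, (q = a ∨ q = b) → mul (mul p q) c0 = 0 := by
      intro p hp q hq
      rw [ex3 p q, hno p hp q hq a (Or.inl rfl), hno p hp q hq b (Or.inr rfl)]
      simp
    have z2 : ∀ p, (p = a ∨ p = b) → mul (mul p b0) c0 = 0 := by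
      intro p hp
      rw [ex2 p c0, z3 p hp a (Or.inl rfl), z3 p hp b (Or.inr rfl)]
      simp
    rw [ex1 b0 c0, z2 a (Or.inl rfl), z2 b (Or.inr rfl)]
    simp
  obtain ⟨p, hp, q, hq, r, hr, hpqr⟩ := hbase
  obtain ⟨φ, hφ⟩ := hdual _ hpqr
  set f : S → S → S → ℂ := fun x y z => φ (mul (mul x y) z) with hfdef2
  have hfapp : ∀ x y z : S, φ (mul (mul x y) z) = f x y z := fun _ _ _ => rfl
  have fsym : ∀ x y z : S, f x y z = f x z y :=
    fun x y z => congrArg φ (zin_e2 mul hL x y z)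
  have fcyc : ∀ x y z : S, f x y z + f y x z + f z x y = 0 := by
    intro x y z
    have h0 := congrArg φ (zin_cyc mul hL hR x y z)
    simpa [hfdef2] using h0
  set s := f a a b with hs_def
  set t := f b b a with ht_def
  have vaab : f a a b = s := rfl
  have vbba : f b b a = t := rfl
  have vaaa : f a a a = 0 := by
    have h1 := fcyc a a a; linear_combination h1 / 3
  have vbbb : f b b b = 0 := by
    have h1 := fcyc b b b; linear_combination h1 / 3
  have vaba : f a b a = s := fsym a b a
  have vbaa : f b a a = -2 * s := by
    have h1 := fcyc a a b; linear_combination h1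
  have vbab : f b a b = t := fsym b a b
  have vabb : f a b b = -2 * t := by
    have h1 := fcyc b b a; linear_combination h1
  have hst : ¬ (s = 0 ∧ t = 0) := by
    rintro ⟨hs0, ht0⟩
    apply hφ
    rw [hfapp]
    rcases hp with rfl | rfl <;> rcases hq with rfl | rfl <;> rcases hr with rfl | rfl
    · exact vaaa
    · exact hs0
    · rw [vaba]; exact hs0
    · rw [vabb, ht0]; ring
    · rw [vbaa, hs0]; ring
    · rw [vbab]; exact ht0
    · exact ht0
    · exact vbbb
  have hleft : ∀ x y z : S, φ (mul z (mul x y)) = - f y z x := by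
    intro x y z
    rw [zin_e1' mul hL hR y z x, map_neg, hfapp]
  -- key : an independent triple of products forces rank ≥ 3 on A2/A3
  have key : ∀ x1 y1 x2 y2 x3 y3 : S,
      (∀ g0 g1 g2 : ℂ, g0 • mul x1 y1 + g1 • mul x2 y2 + g2 • mul x3 y3 ∈ A3 →
        g0 = 0 ∧ g1 = 0 ∧ g2 = 0) → 3 ≤ Module.finrank ℂ (A2 ⧸ A3') := by
    intro x1 y1 x2 y2 x3 y3 hind
    have li : LinearIndependent ℂ
        ![A3'.mkQ ⟨mul x1 y1, hmulmem x1 y1⟩, A3'.mkQ ⟨mul x2 y2, hmulmem x2 y2⟩,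
          A3'.mkQ ⟨mul x3 y3, hmulmem x3 y3⟩] := by
      rw [Fintype.linearIndependent_iff]
      intro g hg
      have hsum : A3'.mkQ (g 0 • ⟨mul x1 y1, hmulmem x1 y1⟩
          + g 1 • ⟨mul x2 y2, hmulmem x2 y2⟩ + g 2 • ⟨mul x3 y3, hmulmem x3 y3⟩) = 0 := by
        rw [map_add, map_add, map_smul, map_smul, map_smul]
        simpa [Fin.sum_univ_three] using hg
      rw [Submodule.mkQ_apply, Submodule.Quotient.mk_eq_zero] at hsum
      have hS : g 0 • mul x1 y1 + g 1 • mul x2 y2 + g 2 • mul x3 y3 ∈ A3 := by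
        have h1 := (hmemA3' _).mp hsum
        simpa using h1
      obtain ⟨h0, h1, h2⟩ := hind _ _ _ hS
      intro i; fin_cases i <;> assumption
    have h3 := li.fintype_card_le_finrank
    simpa using h3
  -- scalar equations from a combination lying in A3
  have eqs : ∀ x1 y1 x2 y2 x3 y3 : S, ∀ g0 g1 g2 : ℂ,
      g0 • mul x1 y1 + g1 • mul x2 y2 + g2 • mul x3 y3 ∈ A3 →
      ∀ z : S, (g0 * f x1 y1 z + g1 * f x2 y2 z + g2 * f x3 y3 z = 0
        ∧ g0 * f y1 z x1 + g1 * f y2 z x2 + g2 * f y3 z x3 = 0) := by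
    intro x1 y1 x2 y2 x3 y3 g0 g1 g2 hmem z
    constructor
    · have h0 := congrArg φ (k3L _ hmem z)
      simp only [map_add, map_smul, LinearMap.add_apply, LinearMap.smul_apply,
        smul_eq_mul, map_zero, hfapp] at h0
      exact h0
    · have h0 := congrArg φ (k3R _ hmem z)
      simp only [map_add, map_smul, smul_eq_mul, map_zero, hleft] at h0
      linear_combination -h0
  -- rank of A2/A3 is at least 3
  have hq2ge3 : 3 ≤ Module.finrank ℂ (A2 ⧸ A3') := by
    by_cases hs0 : s = 0
    · have ht0 : t ≠ 0 := fun h => hst ⟨hs0, h⟩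
      apply key b b b a a b
      intro g0 g1 g2 hmem
      have E1 := ((eqs b b b a a b g0 g1 g2 hmem) b).1
      have E2 := ((eqs b b b a a b g0 g1 g2 hmem) b).2
      have E3 := ((eqs b b b a a b g0 g1 g2 hmem) a).1
      rw [vbbb, vbab, vabb] at E1
      -- E1 : g0 * 0 + g1 * t + g2 * (-2t) = 0
      rw [vbbb, vabb, vbba] at E2
      -- E2 : g0 * 0 + g1 * (-2t) + g2 * t = 0
      rw [vbba, vbaa, vaba] at E3
      -- E3 : g0 * t + g1 * (-2s) + g2 * s = 0
      have hg1 : g1 = 0 := by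
        have h9 : t * (3 * g1) = 0 := by linear_combination -E1 - 2*E2
        have := mul_eq_zero.mp h9
        rcases this with h | h
        · exact absurd h ht0
        · linear_combination h / 3
      have hg2 : g2 = 0 := by
        have h9 : t * (3 * g2) = 0 := by linear_combination -(2*E1) - E2
        rcases mul_eq_zero.mp h9 with h | h
        · exact absurd h ht0
        · linear_combination h / 3
      have hg0 : g0 = 0 := by
        have h9 : t * g0 = 0 := by linear_combination E3 - (-2*s)*hg1 - s*hg2
        rcases mul_eq_zero.mp h9 with h | h
        · exact absurd h ht0
        · exact h
      exact ⟨hg0, hg1, hg2⟩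
    · apply key a a a b b a
      intro g0 g1 g2 hmem
      have E1 := ((eqs a a a b b a g0 g1 g2 hmem) a).1
      have E2 := ((eqs a a a b b a g0 g1 g2 hmem) a).2
      have E3 := ((eqs a a a b b a g0 g1 g2 hmem) b).1
      rw [vaaa, vaba, vbaa] at E1
      -- E1 : g0 * 0 + g1 * s + g2 * (-2s) = 0
      rw [vaaa, vbaa, vaab] at E2
      -- E2 : g0 * 0 + g1 * (-2s) + g2 * s = 0
      rw [vaab, vabb, vbab] at E3
      -- E3 : g0 * s + g1 * (-2t) + g2 * t = 0
      have hg1 : g1 = 0 := by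
        have h9 : s * (3 * g1) = 0 := by linear_combination -E1 - 2*E2
        rcases mul_eq_zero.mp h9 with h | h
        · exact absurd h hs0
        · linear_combination h / 3
      have hg2 : g2 = 0 := by
        have h9 : s * (3 * g2) = 0 := by linear_combination -(2*E1) - E2
        rcases mul_eq_zero.mp h9 with h | h
        · exact absurd h hs0
        · linear_combination h / 3
      have hg0 : g0 = 0 := by
        have h9 : s * g0 = 0 := by linear_combination E3 - (-2*t)*hg1 - t*hg2
        rcases mul_eq_zero.mp h9 with h | h
        · exact absurd h hs0
        · exact h
      exact ⟨hg0, hg1, hg2⟩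
  exact pieceOne (by omega)
end

section
/- Let A = ℂ⁶ with standard basis e₁,…,e₆, and define a bilinear multiplication * on A by e₁*e₂ = e₃, e₂*e₁ = e₄, e₂*e₂ = e₅, e₁*e₅ = e₆, e₅*e₁ = -e₆, e₂*e₄ = -2e₆, e₄*e₂ = -e₆, e₂*e₃ = e₆, e₃*e₂ = 2e₆, and all other products of basis vectors equal to 0. Then * satisfies both the left Zinbiel identity (x*y)*z = x*(y*z + z*y) and the right Zinbiel identity x*(y*z) = (x*y + y*x)*z for all x,y,z ∈ A, and A is not 2-step nilpotent: (e₁*e₂)*e₂ = 2e₆ ≠ 0. In particular there exists a 6-dimensional symmetric Zinbiel algebra over ℂ that is not 2-step nilpotent. -/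
set_option maxHeartbeats 4000000

/-- The standard basis of `ℂ⁶`. -/
def e6 (i : Fin 6) : Fin 6 → ℂ := Pi.single i 1

/-- Structure constants (0-indexed) of the 6-dimensional symmetric Zinbiel algebra:
`e₁e₂ = e₃`, `e₂e₁ = e₄`, `e₂e₂ = e₅`, `e₁e₅ = e₆`, `e₅e₁ = -e₆`,
`e₂e₄ = -2e₆`, `e₄e₂ = -e₆`, `e₂e₃ = e₆`, `e₃e₂ = 2e₆`. -/
def symZinbiel6 (i j : Fin 6) : Fin 6 → ℂ :=
  if i = 0 ∧ j = 1 then e6 2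
  else if i = 1 ∧ j = 0 then e6 3
  else if i = 1 ∧ j = 1 then e6 4
  else if i = 0 ∧ j = 4 then e6 5
  else if i = 4 ∧ j = 0 then -e6 5
  else if i = 1 ∧ j = 3 then (-2 : ℂ) • e6 5
  else if i = 3 ∧ j = 1 then -e6 5
  else if i = 1 ∧ j = 2 then e6 5
  else if i = 2 ∧ j = 1 then (2 : ℂ) • e6 5
  else 0

/-- A linear map on `ℂ⁶` is determined by its values on the standard basis. -/
lemma e6_lm_ext {f g : (Fin 6 → ℂ) →ₗ[ℂ] (Fin 6 → ℂ)}
    (h : ∀ i, f (e6 i) = g (e6 i)) : f = g := by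
  apply (Pi.basisFun ℂ (Fin 6)).ext
  intro i
  simpa [e6, Pi.basisFun_apply] using h i

/-- the above 6-dimensional algebra is a symmetric Zinbiel algebra
which is not 2-step nilpotent: `(e₁*e₂)*e₂ = 2e₆ ≠ 0`. -/
theorem six_dim_symmetric_zinbiel_not_two_step_nilpotent
    (μ : (Fin 6 → ℂ) →ₗ[ℂ] (Fin 6 → ℂ) →ₗ[ℂ] (Fin 6 → ℂ))
    (hμ : ∀ i j, μ (e6 i) (e6 j) = symZinbiel6 i j) :
    (∀ x y z, μ (μ x y) z = μ x (μ y z + μ z y)) ∧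
    (∀ x y z, μ x (μ y z) = μ (μ x y + μ y x) z) ∧
    μ (μ (e6 0) (e6 1)) (e6 1) = (2 : ℂ) • e6 5 ∧
    (2 : ℂ) • e6 5 ≠ (0 : Fin 6 → ℂ) := by
  have key1 : ∀ i j k, μ (μ (e6 i) (e6 j)) (e6 k)
      = μ (e6 i) (μ (e6 j) (e6 k) + μ (e6 k) (e6 j)) := by
    intro i j k
    fin_cases i <;> fin_cases j <;> fin_cases k <;>
      simp [hμ, symZinbiel6, map_smul, map_neg, LinearMap.map_smul₂, LinearMap.map_neg₂,
        smul_smul, two_smul]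
  have key2 : ∀ i j k, μ (e6 i) (μ (e6 j) (e6 k))
      = μ (μ (e6 i) (e6 j) + μ (e6 j) (e6 i)) (e6 k) := by
    intro i j k
    fin_cases i <;> fin_cases j <;> fin_cases k <;>
      simp [hμ, symZinbiel6, map_smul, map_neg, LinearMap.map_smul₂, LinearMap.map_neg₂,
        smul_smul, two_smul]
  -- extend the first identity by linearity, one variable at a time
  have step1 : ∀ (i j : Fin 6) (z), μ (μ (e6 i) (e6 j)) z
      = μ (e6 i) (μ (e6 j) z + μ z (e6 j)) := by
    intro i j z
    have h : μ (μ (e6 i) (e6 j)) = (μ (e6 i)).comp (μ (e6 j) + μ.flip (e6 j)) :=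
      e6_lm_ext fun k => by simpa using key1 i j k
    simpa using congrFun (congrArg (DFunLike.coe) h) z
  have step2 : ∀ (i : Fin 6) (y z), μ (μ (e6 i) y) z
      = μ (e6 i) (μ y z + μ z y) := by
    intro i y z
    have h : (μ.flip z).comp (μ (e6 i)) = (μ (e6 i)).comp (μ.flip z + μ z) :=
      e6_lm_ext fun j => by simpa using step1 i j z
    simpa using congrFun (congrArg (DFunLike.coe) h) y
  have id1 : ∀ x y z, μ (μ x y) z = μ x (μ y z + μ z y) := by
    intro x y z
    have h : (μ.flip z).comp (μ.flip y) = μ.flip (μ y z + μ z y) :=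
      e6_lm_ext fun i => by simpa using step2 i y z
    simpa using congrFun (congrArg (DFunLike.coe) h) x
  -- extend the second identity by linearity
  have step1' : ∀ (i j : Fin 6) (z), μ (e6 i) (μ (e6 j) z)
      = μ (μ (e6 i) (e6 j) + μ (e6 j) (e6 i)) z := by
    intro i j z
    have h : (μ (e6 i)).comp (μ (e6 j)) = μ (μ (e6 i) (e6 j) + μ (e6 j) (e6 i)) :=
      e6_lm_ext fun k => by simpa using key2 i j k
    simpa using congrFun (congrArg (DFunLike.coe) h) z
  have step2' : ∀ (i : Fin 6) (y z), μ (e6 i) (μ y z)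
      = μ (μ (e6 i) y + μ y (e6 i)) z := by
    intro i y z
    have h : (μ (e6 i)).comp (μ.flip z) = (μ.flip z).comp (μ (e6 i) + μ.flip (e6 i)) :=
      e6_lm_ext fun j => by simpa using step1' i j z
    simpa using congrFun (congrArg (DFunLike.coe) h) y
  have id2 : ∀ x y z, μ x (μ y z) = μ (μ x y + μ y x) z := by
    intro x y z
    have h : μ.flip (μ y z) = (μ.flip z).comp (μ.flip y + μ y) :=
      e6_lm_ext fun i => by simpa using step2' i y z
    simpa using congrFun (congrArg (DFunLike.coe) h) x
  refine ⟨id1, id2, ?_, ?_⟩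
  · simp [hμ, symZinbiel6]
  · intro h
    have := congrFun h 5
    simp [e6] at this
end
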